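/- Let L be a bounded lattice equipped with a map x ↦ xᶜ that is involutive, antitone, and satisfies x ⊓ xᶜ = ⊥, and with a binary operation △ satisfying (GEQL1) associativity, (GEQL2) x △ ⊤ = xᶜ = ⊤ △ x, and (GEQL3) x ≤ z and y ≤ z imply x △ y ≤ z. Then for all y, z ∈ L with z ≤ y and y ⊓ zᶜ = ⊥ one has y △ z = ⊥, and consequently z = y. -/

import Mathlib

/-!
Rewriting `b` as `⊤ △ oc b` and using associativity with `x △ ⊤ = oc x = ⊤ △ x`
gives `a △ b = oc a △ oc b`. Hence (GEQL3) bounds `y △ z` both by `y` and by `oc z`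
when `z ≤ y`, so `y △ z ≤ y ⊓ oc z = ⊥`. The same argument gives `x △ x = ⊥`,
and `⊥` is a two-sided unit, so `y = y △ (z △ z) = (y △ z) △ z = z`.
-/

section GeneralizedEnrichedQuantumLogic

variable {L : Type*} [Lattice L] [BoundedOrder L] {oc : L → L} {sd : L → L → L}

theorem oc_top_eq_bot (h_compl : ∀ x : L, x ⊓ oc x = ⊥) : oc ⊤ = ⊥ := by
  simpa using h_compl ⊤

theorem sd_eq_sd_oc_oc (h_inv : ∀ x : L, oc (oc x) = x)
    (hGEQL1 : ∀ x y z : L, sd x (sd y z) = sd (sd x y) z)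
    (hGEQL2 : ∀ x : L, sd x ⊤ = oc x ∧ sd ⊤ x = oc x) (a b : L) :
    sd a b = sd (oc a) (oc b) := by
  conv_lhs => rw [← h_inv b, ← (hGEQL2 (oc b)).2, hGEQL1, (hGEQL2 a).1]

theorem sd_le_oc_of_le (h_inv : ∀ x : L, oc (oc x) = x)
    (h_anti : ∀ x y : L, x ≤ y → oc y ≤ oc x)
    (hGEQL1 : ∀ x y z : L, sd x (sd y z) = sd (sd x y) z)
    (hGEQL2 : ∀ x : L, sd x ⊤ = oc x ∧ sd ⊤ x = oc x)
    (hGEQL3 : ∀ x y z : L, x ≤ z → y ≤ z → sd x y ≤ z)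
    {a b c : L} (hca : c ≤ a) (hcb : c ≤ b) : sd a b ≤ oc c := by
  rw [sd_eq_sd_oc_oc h_inv hGEQL1 hGEQL2]
  exact hGEQL3 _ _ _ (h_anti c a hca) (h_anti c b hcb)

theorem sd_eq_bot_of_le (h_inv : ∀ x : L, oc (oc x) = x)
    (h_anti : ∀ x y : L, x ≤ y → oc y ≤ oc x)
    (hGEQL1 : ∀ x y z : L, sd x (sd y z) = sd (sd x y) z)
    (hGEQL2 : ∀ x : L, sd x ⊤ = oc x ∧ sd ⊤ x = oc x)
    (hGEQL3 : ∀ x y z : L, x ≤ z → y ≤ z → sd x y ≤ z) {y z : L} (hzy : z ≤ y)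
    (hmeet : y ⊓ oc z = ⊥) : sd y z = ⊥ := by
  have h_le_y : sd y z ≤ y := hGEQL3 y z y le_rfl hzy
  have h_le_oc : sd y z ≤ oc z :=
    sd_le_oc_of_le h_inv h_anti hGEQL1 hGEQL2 hGEQL3 hzy le_rfl
  exact le_bot_iff.mp (hmeet ▸ le_inf h_le_y h_le_oc)

theorem sd_self (h_inv : ∀ x : L, oc (oc x) = x)
    (h_anti : ∀ x y : L, x ≤ y → oc y ≤ oc x) (h_compl : ∀ x : L, x ⊓ oc x = ⊥)
    (hGEQL1 : ∀ x y z : L, sd x (sd y z) = sd (sd x y) z)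
    (hGEQL2 : ∀ x : L, sd x ⊤ = oc x ∧ sd ⊤ x = oc x)
    (hGEQL3 : ∀ x y z : L, x ≤ z → y ≤ z → sd x y ≤ z) (x : L) : sd x x = ⊥ :=
  sd_eq_bot_of_le h_inv h_anti hGEQL1 hGEQL2 hGEQL3 le_rfl (h_compl x)

theorem sd_bot (h_inv : ∀ x : L, oc (oc x) = x) (h_compl : ∀ x : L, x ⊓ oc x = ⊥)
    (hGEQL1 : ∀ x y z : L, sd x (sd y z) = sd (sd x y) z)
    (hGEQL2 : ∀ x : L, sd x ⊤ = oc x ∧ sd ⊤ x = oc x) (x : L) : sd x ⊥ = x := by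
  rw [← oc_top_eq_bot h_compl, ← (hGEQL2 ⊤).1, hGEQL1, (hGEQL2 x).1, (hGEQL2 (oc x)).1,
    h_inv]

theorem bot_sd (h_inv : ∀ x : L, oc (oc x) = x) (h_compl : ∀ x : L, x ⊓ oc x = ⊥)
    (hGEQL1 : ∀ x y z : L, sd x (sd y z) = sd (sd x y) z)
    (hGEQL2 : ∀ x : L, sd x ⊤ = oc x ∧ sd ⊤ x = oc x) (x : L) : sd ⊥ x = x := by
  rw [sd_eq_sd_oc_oc h_inv hGEQL1 hGEQL2, ← oc_top_eq_bot h_compl, h_inv, (hGEQL2 (oc x)).2,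
    h_inv]

theorem eq_of_sd_eq_bot (h_inv : ∀ x : L, oc (oc x) = x)
    (h_anti : ∀ x y : L, x ≤ y → oc y ≤ oc x) (h_compl : ∀ x : L, x ⊓ oc x = ⊥)
    (hGEQL1 : ∀ x y z : L, sd x (sd y z) = sd (sd x y) z)
    (hGEQL2 : ∀ x : L, sd x ⊤ = oc x ∧ sd ⊤ x = oc x)
    (hGEQL3 : ∀ x y z : L, x ≤ z → y ≤ z → sd x y ≤ z)
    {y z : L} (h : sd y z = ⊥) : z = y :=
  calc z = sd ⊥ z := (bot_sd h_inv h_compl hGEQL1 hGEQL2 z).symm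
    _ = sd (sd y z) z := by rw [h]
    _ = sd y (sd z z) := (hGEQL1 y z z).symm
    _ = y := by
      rw [sd_self h_inv h_anti h_compl hGEQL1 hGEQL2 hGEQL3, sd_bot h_inv h_compl hGEQL1 hGEQL2]

end GeneralizedEnrichedQuantumLogic

/-- In a bounded lattice with an orthocomplementation `oc` (involutive,
antitone, `x ⊓ oc x = ⊥`) and a symmetric-difference operation `sd` satisfying
(GEQL1)–(GEQL3): if `z ≤ y` and `y ⊓ oc z = ⊥`, then `y ∆ z = ⊥` and
consequently `z = y`. -/
theorem stmt19 {L : Type*} [Lattice L] [BoundedOrder L]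
    (oc : L → L) (sd : L → L → L)
    (h_inv : ∀ x : L, oc (oc x) = x)
    (h_anti : ∀ x y : L, x ≤ y → oc y ≤ oc x)
    (h_compl : ∀ x : L, x ⊓ oc x = ⊥)
    (hGEQL1 : ∀ x y z : L, sd x (sd y z) = sd (sd x y) z)
    (hGEQL2 : ∀ x : L, sd x ⊤ = oc x ∧ sd ⊤ x = oc x)
    (hGEQL3 : ∀ x y z : L, x ≤ z → y ≤ z → sd x y ≤ z) :
    ∀ y z : L, z ≤ y → y ⊓ oc z = ⊥ → sd y z = ⊥ ∧ z = y := by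
  intro y z hzy hmeet
  have hsd : sd y z = ⊥ := sd_eq_bot_of_le h_inv h_anti hGEQL1 hGEQL2 hGEQL3 hzy hmeet
  exact ⟨hsd, eq_of_sd_eq_bot h_inv h_anti h_compl hGEQL1 hGEQL2 hGEQL3 hsd⟩
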